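/- arXiv:1602.03707 — 3 statements merged into one kernel-verified Lean document; each statement's English description precedes it below -/
import Mathlib

section
/- If a Finsler metric has uniformity constant l_F and reversibility constant r_F, then l_F · r_F² ≤ 1. In particular, in the pointwise Minkowski norm setting: if g_v denotes the fundamental tensor of a Minkowski norm F on ℝⁿ at v ≠ 0, and l = inf_{y,v,w ≠ 0} g_v(y,y)/g_w(y,y), r = sup_{y≠0} F(y)/F(-y), then l·r² ≤ 1. -/
/-- If `g v` denotes the fundamental tensor (the quadratic form of the
second derivative of `½F²` at `v ≠ 0`, so that `g v v = F v ^ 2` and `g v (-y) = g v y`),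
`l = inf_{y,v,w ≠ 0} g v y / g w y` is the uniformity constant and
`r = sup_{y ≠ 0} F y / F (-y)` the reversibility constant, then `l * r ^ 2 ≤ 1`. -/
theorem stmt_5 (n : ℕ) (F : (Fin n → ℝ) → ℝ)
    (g : (Fin n → ℝ) → (Fin n → ℝ) → ℝ) (l r : ℝ)
    (hpos : ∀ y, y ≠ 0 → 0 < F y)
    (hgpos : ∀ v y, v ≠ 0 → y ≠ 0 → 0 < g v y)
    (hgF : ∀ v, v ≠ 0 → g v v = F v ^ 2)
    (hgeven : ∀ v y, v ≠ 0 → g v (-y) = g v y)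
    (hl : IsGLB {q : ℝ | ∃ y v w : Fin n → ℝ,
        y ≠ 0 ∧ v ≠ 0 ∧ w ≠ 0 ∧ q = g v y / g w y} l)
    (hr : IsLUB {q : ℝ | ∃ y : Fin n → ℝ, y ≠ 0 ∧ q = F y / F (-y)} r) :
    l * r ^ 2 ≤ 1 := by
  by_cases hex : ∃ y : Fin n → ℝ, y ≠ 0
  · obtain ⟨y0, hy0⟩ := hex
    -- key: for every y ≠ 0, l ≤ F(-y)^2 / F(y)^2
    have key : ∀ y : Fin n → ℝ, y ≠ 0 → l ≤ F (-y) ^ 2 / F y ^ 2 := by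
      intro y hy
      have hny : (-y : Fin n → ℝ) ≠ 0 := neg_ne_zero.mpr hy
      have hmem : g (-y) (-y) / g y (-y) ∈ {q : ℝ | ∃ y v w : Fin n → ℝ,
          y ≠ 0 ∧ v ≠ 0 ∧ w ≠ 0 ∧ q = g v y / g w y} :=
        ⟨-y, -y, y, hny, hny, hy, rfl⟩
      have := hl.1 hmem
      rwa [hgF _ hny, hgeven _ _ hy, hgF _ hy] at this
    rcases le_or_gt l 0 with hl0 | hl0
    · nlinarith [sq_nonneg r]
    · -- every element of the r-set is ≤ sqrt (1/l)
      have hub : r ≤ Real.sqrt (1 / l) := by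
        apply hr.2
        rintro q ⟨y, hy, rfl⟩
        have hny : (-y : Fin n → ℝ) ≠ 0 := neg_ne_zero.mpr hy
        have hFy := hpos y hy
        have hFny := hpos _ hny
        have hq : 0 ≤ F y / F (-y) := le_of_lt (div_pos hFy hFny)
        rw [show F y / F (-y) = Real.sqrt ((F y / F (-y)) ^ 2) from
          (Real.sqrt_sq hq).symm]
        apply Real.sqrt_le_sqrt
        have hk := key y hy
        rw [div_pow, div_le_div_iff₀ (by positivity) (by positivity)]
        rw [le_div_iff₀ (by positivity)] at hk
        nlinarith
      have hr0 : 0 ≤ r := by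
        have hFy := hpos y0 hy0
        have hFny := hpos _ (neg_ne_zero.mpr hy0)
        have : F y0 / F (-y0) ≤ r := hr.1 ⟨y0, hy0, rfl⟩
        have := div_pos hFy hFny
        linarith
      have h2 : r ^ 2 ≤ 1 / l := by
        calc r ^ 2 ≤ Real.sqrt (1 / l) ^ 2 := by
              apply pow_le_pow_left₀ hr0 hub
          _ = 1 / l := Real.sq_sqrt (by positivity)
        
      calc l * r ^ 2 ≤ l * (1 / l) := by nlinarith
        _ = 1 := by field_simp
  · exfalso
    push_neg at hex
    have hemp : {q : ℝ | ∃ y v w : Fin n → ℝ,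
        y ≠ 0 ∧ v ≠ 0 ∧ w ≠ 0 ∧ q = g v y / g w y} = ∅ := by
      ext q; simp only [Set.mem_setOf_eq, Set.mem_empty_iff_false, iff_false]
      rintro ⟨y, v, w, hy, _⟩; exact hy (hex y)
    rw [hemp] at hl
    have : l + 1 ≤ l := hl.2 (by intro x hx; simp at hx)
    linarith
end

section
/- On the Finsler–Poincaré disc, the reversibility function is r_F(x) = ((2+r)/(2−r))² for r = |x| < 2, and hence the global reversibility constant sup_{|x|<2} r_F(x) = +∞ and the uniformity constant inf_{|x|<2} l_F(x) = 0, where l_F(x) = ((1−‖β‖_h(x))/(1+‖β‖_h(x)))² and ‖β‖_h(x) = 4r/(4+r²). -/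
/-- On the Finsler–Poincaré disc, with `‖β‖ₕ(r) = 4r/(4+r²)`,
the pointwise reversibility constant `r_F(r) = (1+‖β‖)/(1−‖β‖)` equals
`((2+r)/(2−r))²` for `0 ≤ r < 2`; the global reversibility constant is `+∞`
(the image of `r_F` on `[0,2)` is not bounded above) and the uniformity constant
`inf l_F`, with `l_F(r) = ((1−‖β‖)/(1+‖β‖))²`, equals `0`. -/
theorem stmt_13 (b rF lF : ℝ → ℝ)
    (hb : ∀ r : ℝ, b r = 4 * r / (4 + r ^ 2))
    (hrF : ∀ r : ℝ, rF r = (1 + b r) / (1 - b r))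
    (hlF : ∀ r : ℝ, lF r = ((1 - b r) / (1 + b r)) ^ 2) :
    (∀ r ∈ Set.Ico (0 : ℝ) 2, rF r = ((2 + r) / (2 - r)) ^ 2) ∧
    ¬ BddAbove (rF '' Set.Ico (0 : ℝ) 2) ∧
    IsGLB (lF '' Set.Ico (0 : ℝ) 2) 0 := by
  have key : ∀ r : ℝ, 0 ≤ r → r < 2 →
      (1 + b r = (2 + r) ^ 2 / (4 + r ^ 2)) ∧ (1 - b r = (2 - r) ^ 2 / (4 + r ^ 2)) := by
    intro r hr0 hr2
    have h4 : (4 : ℝ) + r ^ 2 ≠ 0 := by positivity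
    rw [hb]
    constructor <;> field_simp <;> ring
  have hrFeq : ∀ r : ℝ, 0 ≤ r → r < 2 → rF r = ((2 + r) / (2 - r)) ^ 2 := by
    intro r hr0 hr2
    obtain ⟨h1, h2⟩ := key r hr0 hr2
    have h4 : (4 : ℝ) + r ^ 2 ≠ 0 := by positivity
    have h2r : (2 : ℝ) - r ≠ 0 := by linarith
    have h2p : (2 : ℝ) + r ≠ 0 := by linarith
    rw [hrF r, h1, h2]
    field_simp
  have hlFeq : ∀ r : ℝ, 0 ≤ r → r < 2 → lF r = ((2 - r) / (2 + r)) ^ 4 := by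
    intro r hr0 hr2
    obtain ⟨h1, h2⟩ := key r hr0 hr2
    have h4 : (4 : ℝ) + r ^ 2 ≠ 0 := by positivity
    have h2p : (2 : ℝ) + r ≠ 0 := by linarith
    rw [hlF r, h1, h2]
    field_simp
  refine ⟨fun r hr => hrFeq r hr.1 hr.2, ?_, ?_⟩
  · rintro ⟨M, hM⟩
    set r : ℝ := 2 - 1 / (max M 1 + 1) with hrdef
    have hM1 : (1 : ℝ) ≤ max M 1 := le_max_right _ _
    have hpos : (0 : ℝ) < max M 1 + 1 := by linarith
    have hinv : 0 < 1 / (max M 1 + 1) := by positivity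
    have hinv1 : 1 / (max M 1 + 1) ≤ 1 := by
      rw [div_le_one hpos]; linarith
    have hr0 : 0 ≤ r := by simp only [hrdef]; linarith
    have hr2 : r < 2 := by simp only [hrdef]; linarith
    have hmem : rF r ∈ rF '' Set.Ico (0:ℝ) 2 := ⟨r, ⟨hr0, hr2⟩, rfl⟩
    have hle := hM hmem
    have hval : rF r = ((2 + r) / (2 - r)) ^ 2 := hrFeq r hr0 hr2
    have h2r : 2 - r = 1 / (max M 1 + 1) := by simp [hrdef]
    have hbig : (2 + r) / (2 - r) ≥ max M 1 + 1 := by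
      have h2rpos : 0 < 2 - r := by rw [h2r]; exact hinv
      rw [ge_iff_le, le_div_iff₀ h2rpos, h2r]
      have heq : (max M 1 + 1) * (1 / (max M 1 + 1)) = 1 := by field_simp
      rw [heq]; linarith
    have hsq : rF r ≥ max M 1 + 1 := by
      rw [hval]
      have h1le : (1 : ℝ) ≤ (2 + r) / (2 - r) := by linarith
      calc max M 1 + 1 ≤ (2 + r) / (2 - r) := hbig
        _ ≤ ((2 + r) / (2 - r)) ^ 2 := by nlinarith
    have : M < rF r := by
      have : M ≤ max M 1 := le_max_left _ _
      linarith
    linarith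
  · constructor
    · rintro x ⟨r, ⟨hr0, hr2⟩, rfl⟩
      rw [hlF r]; positivity
    · intro c hc
      by_contra hcpos
      push_neg at hcpos
      set r : ℝ := 2 - min c 1 with hrdef
      have hmin : 0 < min c 1 := lt_min hcpos one_pos
      have hmin1 : min c 1 ≤ 1 := min_le_right _ _
      have hr0 : 0 ≤ r := by simp only [hrdef]; linarith
      have hr2 : r < 2 := by simp only [hrdef]; linarith
      have hle := hc ⟨r, ⟨hr0, hr2⟩, rfl⟩
      have hval : lF r = ((2 - r) / (2 + r)) ^ 4 := hlFeq r hr0 hr2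
      have h2r : 2 - r = min c 1 := by simp [hrdef]
      have h2p : (2 : ℝ) < 2 + r := by
        have : 0 < r := by simp only [hrdef]; linarith
        linarith
      have hq : (2 - r) / (2 + r) < min c 1 / 2 := by
        rw [h2r]
        apply div_lt_div_of_pos_left hmin (by linarith) h2p
      have hq0 : 0 ≤ (2 - r) / (2 + r) := by
        apply div_nonneg (by rw [h2r]; linarith) (by linarith)
      have hsmall : lF r < c := by
        rw [hval]
        have hhalf : min c 1 / 2 ≤ 1 := by linarith
        have hpow : ((2 - r) / (2 + r)) ^ 4 < (min c 1 / 2) ^ 4 := by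
          apply pow_lt_pow_left₀ hq hq0 (by norm_num)
        have : (min c 1 / 2) ^ 4 ≤ min c 1 / 2 := by
          have := pow_le_pow_of_le_one (by linarith : (0:ℝ) ≤ min c 1 / 2) hhalf (by norm_num : 1 ≤ 4)
          simpa using this
        have : (min c 1 / 2) ^ 4 ≤ c := by
          have := min_le_left c 1
          linarith
        linarith
      linarith
end

section
/- Let F(y) = sqrt(h(y,y)) + β(y) be a Randers norm on ℝⁿ with ‖β‖_h < 1. Then its polar transform is F*(α) = [sqrt(h*(α,β)² + (1−‖β‖_h²)·‖α‖_h²) − h*(α,β)] / (1−‖β‖_h²), where h* is the dual inner product on (ℝⁿ)* and ‖α‖_h² = h*(α,α). -/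
/-!
Write `c` for the claimed value. It is the nonnegative root of
`(1 - ‖b‖²) c² + 2 ⟪a, b⟫ c = ‖a‖²`, which says exactly that `‖a - c • b‖ = c`.
Splitting `a = (a - c • b) + c • b`, Cauchy–Schwarz gives
`⟪a, y⟫ ≤ c ‖y‖ + c ⟪b, y⟫ = c F y`, with equality at `y = a - c • b`
(or at any `y ≠ 0` when `a = 0`, where `c = 0`).
-/

open RealInnerProductSpace

lemma quadratic_root_of_pos {k s m : ℝ} (hk : 0 < k) (hD : 0 ≤ s ^ 2 + k * m) :
    k * ((√(s ^ 2 + k * m) - s) / k) ^ 2 + 2 * s * ((√(s ^ 2 + k * m) - s) / k) = m := by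
  have hsq := Real.sq_sqrt hD
  field_simp
  nlinarith

lemma le_sqrt_sq_add {s x : ℝ} (hx : 0 ≤ x) : s ≤ √(s ^ 2 + x) :=
  Real.le_sqrt_of_sq_le (by linarith)

section Randers

variable {E : Type*} [NormedAddCommGroup E] [InnerProductSpace ℝ E]

noncomputable def randersPolar (a b : E) : ℝ :=
  (√(⟪a, b⟫ ^ 2 + (1 - ‖b‖ ^ 2) * ‖a‖ ^ 2) - ⟪a, b⟫) / (1 - ‖b‖ ^ 2)

variable {b : E} (hb : ‖b‖ < 1) (a : E)
include hb

omit [InnerProductSpace ℝ E] in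
lemma one_sub_norm_sq_pos : 0 < 1 - ‖b‖ ^ 2 := by
  nlinarith [norm_nonneg b]

lemma randersPolar_nonneg : 0 ≤ randersPolar a b :=
  div_nonneg (sub_nonneg.2 (le_sqrt_sq_add (by positivity [one_sub_norm_sq_pos hb])))
    (one_sub_norm_sq_pos hb).le

lemma randersPolar_quadratic :
    (1 - ‖b‖ ^ 2) * randersPolar a b ^ 2 + 2 * ⟪a, b⟫ * randersPolar a b = ‖a‖ ^ 2 :=
  quadratic_root_of_pos (one_sub_norm_sq_pos hb) (by positivity [one_sub_norm_sq_pos hb])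

lemma norm_sub_randersPolar_smul : ‖a - randersPolar a b • b‖ = randersPolar a b := by
  have hc := randersPolar_nonneg hb a
  refine (pow_left_inj₀ (norm_nonneg _) hc two_ne_zero).1 ?_
  rw [norm_sub_sq_real, real_inner_smul_right, norm_smul, Real.norm_of_nonneg hc]
  linear_combination -randersPolar_quadratic hb a

omit hb in
lemma inner_eq_inner_sub_smul_add (c : ℝ) (y : E) :
    ⟪a, y⟫ = ⟪a - c • b, y⟫ + c * ⟪b, y⟫ := by
  rw [inner_sub_left, real_inner_smul_left]
  ring

lemma inner_le_randersPolar_mul (y : E) :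
    ⟪a, y⟫ ≤ randersPolar a b * (‖y‖ + ⟪b, y⟫) := by
  have hCS := real_inner_le_norm (a - randersPolar a b • b) y
  rw [norm_sub_randersPolar_smul hb] at hCS
  rw [inner_eq_inner_sub_smul_add a (randersPolar a b) y]
  linarith

lemma randers_pos {y : E} (hy : y ≠ 0) : 0 < ‖y‖ + ⟪b, y⟫ := by
  have hyb : |⟪b, y⟫| < ‖y‖ :=
    (abs_real_inner_le_norm b y).trans_lt (mul_lt_of_lt_one_left (norm_pos_iff.2 hy) hb)
  linarith [neg_abs_le ⟪b, y⟫]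

lemma exists_inner_eq_randersPolar_mul [Nontrivial E] :
    ∃ y : E, y ≠ 0 ∧ ⟪a, y⟫ = randersPolar a b * (‖y‖ + ⟪b, y⟫) := by
  by_cases hy : a - randersPolar a b • b = 0
  · have hc : randersPolar a b = 0 := by
      rw [← norm_sub_randersPolar_smul hb a, hy, norm_zero]
    have ha : a = 0 := by rwa [hc, zero_smul, sub_zero] at hy
    obtain ⟨y, hy⟩ := exists_ne (0 : E)
    exact ⟨y, hy, by rw [hc, ha, inner_zero_left, zero_mul]⟩
  · refine ⟨_, hy, ?_⟩
    rw [inner_eq_inner_sub_smul_add a (randersPolar a b), real_inner_self_eq_norm_sq,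
      norm_sub_randersPolar_smul hb]
    ring

lemma isLUB_randersPolar [Nontrivial E] :
    IsLUB {q : ℝ | ∃ y : E, y ≠ 0 ∧ q = ⟪a, y⟫ / (‖y‖ + ⟪b, y⟫)} (randersPolar a b) := by
  refine ⟨?_, fun u hu => ?_⟩
  · rintro q ⟨y, hy, rfl⟩
    exact (div_le_iff₀ (randers_pos hb hy)).2 (inner_le_randersPolar_mul hb a y)
  · obtain ⟨y, hy, hay⟩ := exists_inner_eq_randersPolar_mul hb a
    refine hu ⟨y, hy, ?_⟩
    rw [hay, mul_div_cancel_right₀ _ (randers_pos hb hy).ne']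

end Randers

/-- For a Randers norm `F y = ‖y‖ + ⟪b, y⟫` on a Euclidean space
(the inner product playing the role of `h`, the 1-form `β` represented via Riesz
by a vector `b` with `‖b‖ < 1`, and a dual covector `α` represented by a vector `a`,
so that `h*(α,β) = ⟪a,b⟫`, `‖α‖ₕ = ‖a‖`), the polar transform
`F* α = sup_{y ≠ 0} α y / F y` equals
`(√(⟪a,b⟫² + (1−‖b‖²)‖a‖²) − ⟪a,b⟫)/(1−‖b‖²)`. -/
theorem stmt_17 (n : ℕ) (hn : 1 ≤ n) (b : EuclideanSpace ℝ (Fin n)) (hb : ‖b‖ < 1)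
    (F : EuclideanSpace ℝ (Fin n) → ℝ)
    (hF : ∀ y, F y = ‖y‖ + inner ℝ b y) :
    ∀ a : EuclideanSpace ℝ (Fin n),
      IsLUB {q : ℝ | ∃ y : EuclideanSpace ℝ (Fin n), y ≠ 0 ∧ q = (inner ℝ a y : ℝ) / F y}
        ((Real.sqrt ((inner ℝ a b : ℝ) ^ 2 + (1 - ‖b‖ ^ 2) * ‖a‖ ^ 2) - (inner ℝ a b : ℝ))
          / (1 - ‖b‖ ^ 2)) := by
  intro a
  obtain rfl : F = fun y => ‖y‖ + inner ℝ b y := funext hF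
  have : Nonempty (Fin n) := ⟨⟨0, hn⟩⟩
  exact isLUB_randersPolar hb a
end
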